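/- arXiv:2505.04823 — 4 statements merged into one kernel-verified Lean document; each statement's English description precedes it below -/
import Mathlib

section
/- Let $x_1 \in S^D$ be a sequence over a finite alphabet $S$, and let the masking noise process produce $x_t$ by independently keeping each coordinate $x_1^i$ with probability $t$ and replacing it by a mask symbol '?' with probability $1-t$, for $t$ drawn from a distribution $p(t)$ with full support on $[0,1]$. Then the posterior $p(x_1 \mid x_t, t)$ does not depend on $t$: for all $t, t' \in (0,1)$ and all masked states $x_t$, $p(x_1 \mid X_t = x_t, T = t) = p(x_1 \mid X_{t'} = x_t, T = t')$. -/
open Finset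

/-- Likelihood of observing the masked sequence `xt` given clean sequence `x1` under the
masking noise process at time `t`: each coordinate is kept (equal to `x1 i`) with
probability `t` and replaced by the mask symbol `none` with probability `1 - t`. -/
noncomputable def maskLik {D : ℕ} {S : Type*} [DecidableEq S]
    (t : ℝ) (x1 : Fin D → S) (xt : Fin D → Option S) : ℝ :=
  ∏ i : Fin D, (xt i).elim (1 - t) (fun a => if a = x1 i then t else 0)

/-- Posterior `p(x1 ∣ X_t = xt, T = t)` under data distribution `pdata` and the
masking noise process. -/
noncomputable def maskPosterior {D : ℕ} {S : Type*} [Fintype S] [DecidableEq S]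
    (pdata : (Fin D → S) → ℝ) (t : ℝ) (x1 : Fin D → S) (xt : Fin D → Option S) : ℝ :=
  pdata x1 * maskLik t x1 xt / ∑ z : Fin D → S, pdata z * maskLik t z xt

/-- The time-dependent part of the likelihood. -/
noncomputable def maskC {D : ℕ} {S : Type*} (t : ℝ) (xt : Fin D → Option S) : ℝ :=
  ∏ i : Fin D, (xt i).elim (1 - t) (fun _ => t)

/-- The time-independent indicator part of the likelihood. -/
noncomputable def maskInd {D : ℕ} {S : Type*} [DecidableEq S]
    (x1 : Fin D → S) (xt : Fin D → Option S) : ℝ :=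
  ∏ i : Fin D, (xt i).elim 1 (fun a => if a = x1 i then 1 else 0)

lemma maskLik_eq {D : ℕ} {S : Type*} [DecidableEq S]
    (t : ℝ) (x1 : Fin D → S) (xt : Fin D → Option S) :
    maskLik t x1 xt = maskC t xt * maskInd x1 xt := by
  rw [maskLik, maskC, maskInd, ← Finset.prod_mul_distrib]
  refine Finset.prod_congr rfl fun i _ => ?_
  cases xt i with
  | none => simp
  | some a => simp only [Option.elim]; split <;> simp

lemma maskC_pos {D : ℕ} {S : Type*} {t : ℝ} (ht : t ∈ Set.Ioo (0 : ℝ) 1)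
    (xt : Fin D → Option S) : 0 < maskC t xt := by
  apply Finset.prod_pos
  intro i _
  cases xt i with
  | none => simpa using sub_pos.mpr ht.2
  | some a => simpa using ht.1

/-- Under the masking noise process, the posterior over the clean
sequence given the masked observation does not depend on the time `t`. -/
theorem posterior_time_independent {D : ℕ} {S : Type*} [Fintype S] [DecidableEq S]
    (pdata : (Fin D → S) → ℝ) (hpdata : ∀ z, 0 ≤ pdata z)
    (t t' : ℝ) (ht : t ∈ Set.Ioo (0 : ℝ) 1) (ht' : t' ∈ Set.Ioo (0 : ℝ) 1)
    (x1 : Fin D → S) (xt : Fin D → Option S) :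
    maskPosterior pdata t x1 xt = maskPosterior pdata t' x1 xt := by
  have key : ∀ s : ℝ, s ∈ Set.Ioo (0 : ℝ) 1 →
      maskPosterior pdata s x1 xt =
        pdata x1 * maskInd x1 xt / ∑ z : Fin D → S, pdata z * maskInd z xt := by
    intro s hs
    have hc := (maskC_pos hs xt).ne'
    unfold maskPosterior
    simp only [maskLik_eq]
    have hsum : ∑ z : Fin D → S, pdata z * (maskC s xt * maskInd z xt)
        = maskC s xt * ∑ z : Fin D → S, pdata z * maskInd z xt := by
      rw [Finset.mul_sum]; congr 1; ext z; ring
    rw [hsum, show pdata x1 * (maskC s xt * maskInd x1 xt)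
        = maskC s xt * (pdata x1 * maskInd x1 xt) by ring,
      mul_div_mul_left _ _ hc]
  rw [key t ht, key t' ht']
end

section
/- Let a continuous-time Markov chain on a finite state space have conditional transition rates $R_t(x, \tilde{x})$, and let $y$ be an auxiliary observation with smooth positive likelihood $p(y \mid x, t)$ along the process. Then the rates of the chain conditioned on $y$ satisfy $R_t(x, \tilde{x} \mid y) = \frac{p(y \mid \tilde{x}, t)}{p(y \mid x, t)} R_t(x, \tilde{x})$ for all $\tilde{x} \neq x$. That is, if $p(x_{t+dt} = \tilde{x} \mid x_t = x) = \delta_{x,\tilde{x}} + R_t(x,\tilde{x}) dt + o(dt)$ and $p(y \mid x_{t+dt}, x_t) = p(y \mid x_{t+dt})$ (conditional independence given the later state), then $p(x_{t+dt} = \tilde{x} \mid x_t = x, y) = \delta_{x,\tilde{x}} + \frac{p(y \mid \tilde{x}, t+dt)}{p(y \mid x, t)} R_t(x,\tilde{x}) dt + o(dt)$ for $\tilde{x} \neq x$. -/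
open Filter Finset

/-- Let a CTMC on a finite state space have transition probabilities
`P h x x̃ = δ_{x,x̃} + R(x,x̃) h + o(h)` over an infinitesimal horizon `h` from time `t`,
and let `y` be an observation with positive likelihood `L s z = p(y ∣ z, s)` continuous
in time, conditionally independent of the earlier state given the later state. Then the
Bayes-conditioned transition probability
`p(x_{t+h} = x̃ ∣ x_t = x, y) = L(t+h, x̃) P h x x̃ / ∑_z L(t+h, z) P h x z`
satisfies, for `x̃ ≠ x`,
`p(x_{t+h} = x̃ ∣ x_t = x, y) = (L(t,x̃)/L(t,x)) R(x,x̃) h + o(h)`,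
i.e. the guided rate is `R(x, x̃ ∣ y) = (p(y∣x̃,t)/p(y∣x,t)) R(x,x̃)`. -/
theorem guided_rate_bayes {X : Type*} [Fintype X]
    (t : ℝ) (P : ℝ → X → X → ℝ) (R : X → X → ℝ) (L : ℝ → X → ℝ)
    (x xt : X) (hne : xt ≠ x)
    (hoff : ∀ z : X, z ≠ x →
      Tendsto (fun h : ℝ => P h x z / h) (nhdsWithin 0 (Set.Ioi 0)) (nhds (R x z)))
    (hdiag : Tendsto (fun h : ℝ => P h x x) (nhdsWithin 0 (Set.Ioi 0)) (nhds 1))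
    (hLcont : ∀ z : X,
      Tendsto (fun h : ℝ => L (t + h) z) (nhdsWithin 0 (Set.Ioi 0)) (nhds (L t z)))
    (hLpos : ∀ s z, 0 < L s z) :
    Tendsto
      (fun h : ℝ =>
        (L (t + h) xt * P h x xt / ∑ z : X, L (t + h) z * P h x z) / h)
      (nhdsWithin 0 (Set.Ioi 0))
      (nhds (L t xt / L t x * R x xt)) := by
  classical
  set l := nhdsWithin (0:ℝ) (Set.Ioi 0) with hl
  have hid : Tendsto (fun h : ℝ => h) l (nhds 0) :=
    tendsto_nhdsWithin_of_tendsto_nhds tendsto_id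
  have hP0 : ∀ z : X, z ≠ x → Tendsto (fun h : ℝ => P h x z) l (nhds 0) := by
    intro z hz
    have := (hoff z hz).mul hid
    rw [mul_zero] at this
    refine this.congr' ?_
    filter_upwards [self_mem_nhdsWithin] with h hh
    exact div_mul_cancel₀ _ (ne_of_gt hh)
  have hS : Tendsto (fun h : ℝ => ∑ z : X, L (t + h) z * P h x z) l (nhds (L t x)) := by
    have : Tendsto (fun h : ℝ => ∑ z : X, L (t + h) z * P h x z) l
        (nhds (∑ z : X, if z = x then L t x else 0)) := by
      refine tendsto_finset_sum _ (fun z _ => ?_)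
      by_cases hz : z = x
      · subst hz; simp only [if_pos rfl]
        simpa using (hLcont z).mul hdiag
      · simp only [if_neg hz]
        simpa using (hLcont z).mul (hP0 z hz)
    simpa using this
  have hmain : Tendsto (fun h : ℝ =>
      L (t + h) xt * (P h x xt / h) / (∑ z : X, L (t + h) z * P h x z)) l
      (nhds (L t xt * R x xt / L t x)) :=
    ((hLcont xt).mul (hoff xt hne)).div hS (ne_of_gt (hLpos t x))
  have heq : (L t xt * R x xt / L t x) = L t xt / L t x * R x xt := by ring
  rw [← heq]
  refine hmain.congr (fun h => ?_)
  ring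
end

section
/- The path density of the zero-stochasticity masked flow-matching CTMC factorizes into a time term and a state term: $\mathbb{P}_{MFM}(\boldsymbol{\tau}, \mathbf{X}) = \left(\prod_{i=1}^D \dot{\kappa}_{\tau_i}\right) \cdot \left(\prod_{i=1}^D p_{1|\tau_i}^\theta\big(X_1^{\sigma(i)} = x_{\tau_i}^{\sigma(i)} \mid X_{\tau_i}^- = x_{\tau_{i-1}}\big)\right)$, where $\boldsymbol{\tau} = (\tau_1 < \dots < \tau_D)$ are the jump times and $\sigma$ the induced unmasking order. Consequently, when $\kappa_t = t$, sampling a path from the MFM is distributionally equivalent to: (i) sampling $D$ i.i.d. uniform times on $[0,1]$ assigned to positions, (ii) sorting them to obtain an order $\sigma$, and (iii) sampling the unmasked values from the any-order autoregressive model with conditionals given by the MFM denoiser in order $\sigma$. -/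
open Finset

private lemma telescope_prod (f : ℕ → ℝ) (n : ℕ) (h : ∀ i < n, f i ≠ 0) (h0 : f 0 = 1) :
    ∏ i ∈ Finset.range n, f (i + 1) / f i = f n := by
  induction n with
  | zero => simp [h0]
  | succ n ih =>
      rw [Finset.prod_range_succ, ih (fun i hi => h i (Nat.lt_succ_of_lt hi)),
        mul_comm, div_mul_cancel₀ _ (h n (Nat.lt_succ_self n))]

/-- The path density of the zero-stochasticity masked flow-matching
CTMC — the product over jumps `i = 1, …, D` of the conditional jump-time density
`(D-i+1) κ'(τ_i)/(1-κ(τ_{i-1})) ((1-κ(τ_i))/(1-κ(τ_{i-1})))^(D-i)` (Lemma 1) and the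
state-transition probability `q_i/(D-i+1)` (Lemma 2, where
`q_i = p_{1|τ_i}^θ(X_1^{σ(i)} = x_{τ_i}^{σ(i)} ∣ X_{τ_i}^- = x_{τ_{i-1}})`) —
factorizes into a time term and a state term:
`P_MFM(τ, X) = (∏_i κ'(τ_i)) ⬝ (∏_i q_i)`.
In particular, for the linear schedule (`κ'(τ_i) = 1`, i.i.d. uniform jump times) the
path density reduces to the any-order autoregressive product `∏_i q_i` of the MFM
denoiser conditionals along the induced unmasking order. -/
theorem mfm_path_density_factorizes (D : ℕ) (κ κ' : ℝ → ℝ) (τ : ℕ → ℝ) (q : ℕ → ℝ)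
    (hκ0 : κ (τ 0) = 0)
    (hκne : ∀ i < D, κ (τ i) ≠ 1) :
    (∏ i ∈ Finset.range D,
        (((D : ℝ) - i) * (κ' (τ (i + 1)) / (1 - κ (τ i))) *
            ((1 - κ (τ (i + 1))) / (1 - κ (τ i))) ^ (D - (i + 1)) *
          (q (i + 1) / ((D : ℝ) - i))))
      = (∏ i ∈ Finset.range D, κ' (τ (i + 1))) * (∏ i ∈ Finset.range D, q (i + 1))
    ∧ ((∀ i ∈ Finset.range D, κ' (τ (i + 1)) = 1) →
        (∏ i ∈ Finset.range D,
            (((D : ℝ) - i) * (κ' (τ (i + 1)) / (1 - κ (τ i))) *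
                ((1 - κ (τ (i + 1))) / (1 - κ (τ i))) ^ (D - (i + 1)) *
              (q (i + 1) / ((D : ℝ) - i))))
          = ∏ i ∈ Finset.range D, q (i + 1)) := by
  set f : ℕ → ℝ := fun i => (1 - κ (τ i)) ^ (D - i) with hf
  have hf0 : f 0 = 1 := by simp [hf, hκ0]
  have hfne : ∀ i < D, f i ≠ 0 := fun i hi =>
    pow_ne_zero _ (sub_ne_zero.mpr fun h => (hκne i hi) h.symm)
  have key : ∀ i ∈ Finset.range D,
      (((D : ℝ) - i) * (κ' (τ (i + 1)) / (1 - κ (τ i))) *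
          ((1 - κ (τ (i + 1))) / (1 - κ (τ i))) ^ (D - (i + 1)) *
        (q (i + 1) / ((D : ℝ) - i)))
      = κ' (τ (i + 1)) * q (i + 1) * (f (i + 1) / f i) := by
    intro i hi
    rw [Finset.mem_range] at hi
    have hDi : ((D : ℝ) - i) ≠ 0 := by
      have : (i : ℝ) < D := by exact_mod_cast hi
      linarith
    have h1 : (1 : ℝ) - κ (τ i) ≠ 0 := sub_ne_zero.mpr fun h => (hκne i hi) h.symm
    have hpow : f i = (1 - κ (τ i)) ^ (D - (i + 1)) * (1 - κ (τ i)) := by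
      have : D - i = (D - (i + 1)) + 1 := by omega
      rw [hf]; simp only [this, pow_succ]
    have hfi1 : f (i + 1) = (1 - κ (τ (i + 1))) ^ (D - (i + 1)) := rfl
    rw [hfi1, hpow, div_pow]
    field_simp
  have main : (∏ i ∈ Finset.range D,
      (((D : ℝ) - i) * (κ' (τ (i + 1)) / (1 - κ (τ i))) *
          ((1 - κ (τ (i + 1))) / (1 - κ (τ i))) ^ (D - (i + 1)) *
        (q (i + 1) / ((D : ℝ) - i))))
      = (∏ i ∈ Finset.range D, κ' (τ (i + 1))) * (∏ i ∈ Finset.range D, q (i + 1)) := by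
    rw [Finset.prod_congr rfl key, Finset.prod_mul_distrib, Finset.prod_mul_distrib,
      telescope_prod f D hfne hf0]
    have : f D = 1 := by simp [hf]
    rw [this, mul_one]
  refine ⟨main, fun h => ?_⟩
  rw [main, Finset.prod_congr rfl h, Finset.prod_const_one, one_mul]
end

section
/- For the linear interpolation schedule $\kappa_t = t$ on $D$ positions, the density of the full jump-time vector of the masked flow-matching CTMC, $\prod_{i=1}^D (D - i + 1) \frac{1}{1 - \tau_{i-1}} \left(\frac{1 - \tau_i}{1 - \tau_{i-1}}\right)^{D-i}$ (with $\tau_0 = 0$), telescopes to the constant $D!$ on the simplex $\{0 < \tau_1 < \dots < \tau_D < 1\}$; i.e., the jump times are distributed as the order statistics of $D$ i.i.d. uniform random variables. -/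
open Finset

/-- For the linear schedule `κ_t = t` on `D` positions, the product of
the per-step conditional jump-time densities
`∏_{i=1}^D (D-i+1) (1/(1-τ_{i-1})) ((1-τ_i)/(1-τ_{i-1}))^(D-i)` (with `τ_0 = 0`)
telescopes to the constant `D!` on the ordered simplex `0 < τ_1 < ⋯ < τ_D < 1`;
i.e. the jump times have the density of the order statistics of `D` i.i.d. uniforms. -/
theorem jump_time_density_telescopes (D : ℕ) (τ : ℕ → ℝ)
    (hτ0 : τ 0 = 0)
    (hmono : ∀ i < D, τ i < τ (i + 1))
    (hlt : τ D < 1) :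
    ∏ i ∈ Finset.range D,
        (((D : ℝ) - i) * (1 / (1 - τ i)) * ((1 - τ (i + 1)) / (1 - τ i)) ^ (D - (i + 1)))
      = (Nat.factorial D : ℝ) := by
  have hpos : ∀ i ≤ D, 0 < 1 - τ i := by
    intro i hi
    have h : ∀ k, i + k ≤ D → τ i ≤ τ (i + k) := by
      intro k
      induction k with
      | zero => intro _; simp
      | succ k ih =>
        intro hk
        have h1 := ih (by omega)
        have h2 := hmono (i + k) (by omega)
        show τ i ≤ τ (i + k + 1)
        linarith
    have hD := h (D - i) (by omega)
    rw [Nat.add_sub_cancel' hi] at hD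
    linarith
  set f : ℕ → ℝ := fun i => (1 - τ i) ^ (D - i) with hf
  have key : ∀ n ≤ D, ∏ i ∈ Finset.range n,
      (((D : ℝ) - i) * (1 / (1 - τ i)) * ((1 - τ (i + 1)) / (1 - τ i)) ^ (D - (i + 1)))
      = (D.descFactorial n : ℝ) * f n := by
    intro n
    induction n with
    | zero => intro _; simp [hf, hτ0]
    | succ n ih =>
      intro hn
      rw [Finset.prod_range_succ, ih (by omega)]
      have h1 : (0:ℝ) < 1 - τ n := hpos n (by omega)
      have h2 : (1 - τ n) ≠ 0 := ne_of_gt h1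
      have hD : D - n = (D - (n + 1)) + 1 := by omega
      rw [Nat.descFactorial_succ]
      push_cast [Nat.cast_sub (by omega : n ≤ D)]
      simp only [hf]
      rw [hD, div_pow]
      field_simp
      ring
  have hkey := key D le_rfl
  simp only [hf, Nat.sub_self, pow_zero, mul_one, Nat.descFactorial_self] at hkey
  rw [hkey]
end
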